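/- Let φ : A → ℂ be a (possibly non-linear) functional on a von Neumann algebra A (e.g., A = Mₙ(ℂ)). Then φ is 2-positive (i.e., [[φ(a), φ(c)],[φ(c*), φ(b)]] ≥ 0 whenever [[a, c],[c*, b]] ≥ 0) if and only if: (i) φ(a) ≥ 0 for a ≥ 0; (ii) φ is monotone on positives; (iii) φ(a*) = φ(a)* for all a; and (iv) |φ(a*b)|² ≤ φ(a*a)φ(b*b) for all a, b. -/

import Mathlib

open Matrix BigOperators Finset
open scoped ComplexOrder

/-- The `i`-th largest eigenvalue (0-indexed) of a Hermitian matrix. -/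
noncomputable def eigDesc {n : ℕ} (a : Matrix (Fin n) (Fin n) ℂ) (ha : a.IsHermitian) (i : Fin n) : ℝ :=
  ha.eigenvalues (Tuple.sort ha.eigenvalues i.rev)

/-- Eigenvalues in decreasing order, extended by `0` beyond the size. `eigN a ha i = λ_{i+1}(a)`. -/
noncomputable def eigN {n : ℕ} (a : Matrix (Fin n) (Fin n) ℂ) (ha : a.IsHermitian) (i : ℕ) : ℝ :=
  if h : i < n then eigDesc a ha ⟨i, h⟩ else 0

/-- The non-linear trace of Choquet type:
`φ_α(a) = ∑_{i=1}^{n-1} (λ_i(a) - λ_{i+1}(a)) α(i) + λ_n(a) α(n)`. -/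
noncomputable def choquetTrace {n : ℕ} (α : ℕ → ℝ) (a : Matrix (Fin n) (Fin n) ℂ)
    (ha : a.IsHermitian) : ℝ :=
  ∑ i ∈ Finset.range n, (eigN a ha i - eigN a ha (i + 1)) * α (i + 1)

/-- Functional calculus of a Hermitian matrix `a` by a function `f : ℝ → ℝ` on its eigenvalues. -/
noncomputable def funCalc {n : ℕ} (f : ℝ → ℝ) (a : Matrix (Fin n) (Fin n) ℂ)
    (ha : a.IsHermitian) : Matrix (Fin n) (Fin n) ℂ :=
  (ha.eigenvectorUnitary : Matrix (Fin n) (Fin n) ℂ) *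
    Matrix.diagonal (fun i => (f (ha.eigenvalues i) : ℂ)) *
    star (ha.eigenvectorUnitary : Matrix (Fin n) (Fin n) ℂ)

/-- Old Mathlib's `Matrix.PosSemidef.sqrt` (removed since), restated with its old definition. -/
noncomputable def Matrix.PosSemidef.sqrt {𝕜 : Type*} [RCLike 𝕜] {m : Type*} [Fintype m] [DecidableEq m]
    {A : Matrix m m 𝕜} (hA : A.PosSemidef) : Matrix m m 𝕜 :=
  hA.1.eigenvectorUnitary.1 * Matrix.diagonal ((↑) ∘ (√·) ∘ hA.1.eigenvalues) *
    (star hA.1.eigenvectorUnitary : Matrix m m 𝕜)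

theorem Matrix.PosSemidef.posSemidef_sqrt {𝕜 : Type*} [RCLike 𝕜] {m : Type*} [Fintype m]
    [DecidableEq m] {A : Matrix m m 𝕜} (hA : A.PosSemidef) : hA.sqrt.PosSemidef := by
  unfold Matrix.PosSemidef.sqrt
  rw [Matrix.star_eq_conjTranspose]
  exact (Matrix.posSemidef_diagonal_iff.mpr fun i =>
    RCLike.ofReal_nonneg.mpr (Real.sqrt_nonneg _)).mul_mul_conjTranspose_same _

/-- The absolute value `|a| = (a^* a)^{1/2}` of a matrix. -/
noncomputable def matAbs {n : ℕ} (a : Matrix (Fin n) (Fin n) ℂ) : Matrix (Fin n) (Fin n) ℂ :=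
  (Matrix.posSemidef_conjTranspose_mul_self a).sqrt

theorem matAbs_isHermitian {n : ℕ} (a : Matrix (Fin n) (Fin n) ℂ) : (matAbs a).IsHermitian :=
  (Matrix.posSemidef_conjTranspose_mul_self a).posSemidef_sqrt.1

/-!
Two-positivity applied to Gram block matrices `fromBlocks (xᴴx) (xᴴy) (yᴴx) (yᴴy)` gives
positivity, monotonicity, `φ aᴴ = star (φ a)` and the Schwarz inequality. Conversely, a positive
block matrix `fromBlocks a c cᴴ b` is the Gram matrix of two rectangular matrices `X, Y`;
compressing both by the partial isometry `V = (XᴴX)^{-1/2} Xᴴ`, whose initial projection fixes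
`X`, gives square `x, y` with `a = xᴴx`, `c = xᴴy` and `yᴴy ≤ b`. Hence
`‖φ c‖² ≤ φ a * φ (yᴴy) ≤ φ a * φ b`, which with positivity of `φ` and the star property is
positivity of the `2 × 2` matrix.
-/

namespace Matrix

open scoped MatrixOrder

variable {𝕜 : Type*} [RCLike 𝕜]

theorem posSemidef_fin_two_of {w x z : 𝕜} (hw : 0 ≤ w) (hz : 0 ≤ z)
    (hx : ((‖x‖ : ℝ) : 𝕜) ^ 2 ≤ w * z) : (!![w, x; star x, z]).PosSemidef := by
  obtain ⟨r, hr, rfl⟩ := RCLike.nonneg_iff_exists_ofReal.mp hw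
  obtain ⟨s, hs, rfl⟩ := RCLike.nonneg_iff_exists_ofReal.mp hz
  rw [← RCLike.ofReal_pow, ← RCLike.ofReal_mul, RCLike.ofReal_le_ofReal] at hx
  rcases hr.eq_or_lt with rfl | hr
  · obtain rfl : x = 0 := by simpa using hx
    have hdiag : !![((0 : ℝ) : 𝕜), 0; star 0, s] = diagonal ![0, (s : 𝕜)] := by
      ext i j; fin_cases i <;> fin_cases j <;> simp
    rw [hdiag, posSemidef_diagonal_iff, Fin.forall_fin_two]
    exact ⟨le_rfl, RCLike.ofReal_nonneg.mpr hs⟩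
  · -- completing the square in the first coordinate
    set u : Fin 2 → 𝕜 := ![(r : 𝕜), star x]
    have hdecomp : !![(r : 𝕜), x; star x, s] =
        r⁻¹ • vecMulVec u (star u) + diagonal ![0, ((s - ‖x‖ ^ 2 / r : ℝ) : 𝕜)] := by
      have hr' : (r : 𝕜) ≠ 0 := by exact_mod_cast hr.ne'
      ext i j
      fin_cases i <;> fin_cases j <;>
        simp [u, vecMulVec, hr', RCLike.conj_mul, RCLike.real_smul_eq_coe_mul,
          RCLike.algebraMap_eq_ofReal]
      all_goals field_simp
      ring
    rw [hdecomp]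
    refine .add (.smul (posSemidef_vecMulVec_self_star u) (inv_nonneg.mpr hr.le)) ?_
    rw [posSemidef_diagonal_iff, Fin.forall_fin_two]
    refine ⟨le_rfl, ?_⟩
    change 0 ≤ ((s - ‖x‖ ^ 2 / r : ℝ) : 𝕜)
    rwa [RCLike.ofReal_nonneg, sub_nonneg, div_le_iff₀ hr, mul_comm]

theorem posSemidef_fin_two_iff {w x y z : 𝕜} :
    (!![w, x; y, z]).PosSemidef ↔ 0 ≤ w ∧ 0 ≤ z ∧ y = star x ∧ ((‖x‖ : ℝ) : 𝕜) ^ 2 ≤ w * z := by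
  refine ⟨fun h => ?_, fun ⟨hw, hz, hy, hx⟩ => hy ▸ posSemidef_fin_two_of hw hz hx⟩
  obtain rfl : y = star x := by simpa using (h.1.apply 1 0).symm
  refine ⟨by simpa using h.diag_nonneg (i := 0), by simpa using h.diag_nonneg (i := 1), rfl, ?_⟩
  have hdet := h.det_nonneg
  rwa [det_fin_two_of, RCLike.star_def, RCLike.mul_conj, sub_nonneg] at hdet

theorem PosSemidef.le_of_fin_two {w x : 𝕜} (h : (!![w, x; x, x]).PosSemidef) : x ≤ w := by
  simpa [dotProduct, mulVec, Fin.sum_univ_two] using h.dotProduct_mulVec_nonneg ![1, -1]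

variable {l m n : Type*} [Fintype l] [Fintype m] [Fintype n]

theorem posSemidef_fromBlocks_gram (x : Matrix l m 𝕜) (y : Matrix l n 𝕜) :
    (fromBlocks (xᴴ * x) (xᴴ * y) (yᴴ * x) (yᴴ * y)).PosSemidef := by
  rw [← fromRows_mul_fromCols, ← conjTranspose_fromCols_eq_fromRows_conjTranspose]
  exact posSemidef_conjTranspose_mul_self _

theorem PosSemidef.exists_fromBlocks_eq_gram [DecidableEq m] [DecidableEq n] {a : Matrix m m 𝕜}
    {b : Matrix n n 𝕜} {c : Matrix m n 𝕜} (h : (fromBlocks a c cᴴ b).PosSemidef) :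
    ∃ (x : Matrix (m ⊕ n) m 𝕜) (y : Matrix (m ⊕ n) n 𝕜), a = xᴴ * x ∧ c = xᴴ * y ∧ b = yᴴ * y := by
  obtain ⟨R, hR⟩ := CStarAlgebra.nonneg_iff_eq_star_mul_self.mp h.nonneg
  rw [← fromCols_toCols R, star_eq_conjTranspose, conjTranspose_fromCols_eq_fromRows_conjTranspose,
    fromRows_mul_fromCols, fromBlocks_inj] at hR
  exact ⟨R.toCols₁, R.toCols₂, hR.1, hR.2.1, hR.2.2.2⟩

theorem PosSemidef.mul_cfc_inv_sqrt_mul_self_mul [DecidableEq n] {a : Matrix n n 𝕜}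
    (ha : a.PosSemidef) :
    a * (cfc (fun r => (√r)⁻¹) a * cfc (fun r => (√r)⁻¹) a * a) = a := by
  have hcont (f : ℝ → ℝ) : ContinuousOn f (spectrum ℝ a) := a.finite_real_spectrum.continuousOn f
  have key : cfc (fun r => r * ((√r)⁻¹ * (√r)⁻¹ * r)) a = cfc (id : ℝ → ℝ) a := by
    refine cfc_congr fun r hr => ?_
    rcases (spectrum_nonneg_of_nonneg ha.nonneg hr).eq_or_lt with rfl | hr0
    · simp
    · rw [← mul_inv, Real.mul_self_sqrt hr0.le, inv_mul_cancel₀ hr0.ne', mul_one, id]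
  rwa [cfc_mul _ _ a (hcont _) (hcont _), cfc_mul _ _ a (hcont _) (hcont _),
    cfc_mul _ _ a (hcont _) (hcont _), cfc_id' ℝ a, cfc_id ℝ a] at key

/-- `V = (XᴴX)^{-1/2} Xᴴ` (with `0⁻¹ = 0`) is a partial isometry whose initial projection `VᴴV`
is the range projection of `X`. -/
theorem exists_isStarProjection_conjTranspose_mul_self_mul_eq [DecidableEq n] (X : Matrix l n 𝕜) :
    ∃ V : Matrix n l 𝕜, IsStarProjection (Vᴴ * V) ∧ Vᴴ * V * X = X := by
  set a := Xᴴ * X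
  set t := cfc (fun r => (√r)⁻¹) a
  have ht : tᴴ = t := (cfc_predicate _ _ : IsSelfAdjoint t)
  have hX : X * (t * t * a) = X := by
    have hsub : X - X * (t * t * a) = X * (1 - t * t * a) := by rw [Matrix.mul_sub, Matrix.mul_one]
    have hzero : (X - X * (t * t * a))ᴴ * (X - X * (t * t * a)) = 0 := by
      rw [hsub, conjTranspose_mul, Matrix.mul_assoc, ← Matrix.mul_assoc Xᴴ, mul_one_sub,
        (posSemidef_conjTranspose_mul_self X).mul_cfc_inv_sqrt_mul_self_mul, sub_self,
        Matrix.mul_zero]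
    exact (sub_eq_zero.mp (conjTranspose_mul_self_eq_zero.mp hzero)).symm
  have hP : (t * Xᴴ)ᴴ * (t * Xᴴ) = X * (t * (t * Xᴴ)) := by
    rw [conjTranspose_mul, conjTranspose_conjTranspose, ht]
    simp only [Matrix.mul_assoc]
  refine ⟨t * Xᴴ, ⟨?_, isHermitian_conjTranspose_mul_self _⟩, ?_⟩
  · rw [IsIdempotentElem, hP]
    simpa only [a, Matrix.mul_assoc] using congrArg (· * (t * (t * Xᴴ))) hX
  · simpa only [hP, a, Matrix.mul_assoc] using hX

theorem PosSemidef.exists_fromBlocks_eq_square_gram [DecidableEq m] [DecidableEq n]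
    {a : Matrix m m 𝕜} {b : Matrix n n 𝕜} {c : Matrix m n 𝕜}
    (h : (fromBlocks a c cᴴ b).PosSemidef) :
    ∃ (x : Matrix m m 𝕜) (y : Matrix m n 𝕜), a = xᴴ * x ∧ c = xᴴ * y ∧ (b - yᴴ * y).PosSemidef := by
  obtain ⟨X, Y, rfl, rfl, rfl⟩ := h.exists_fromBlocks_eq_gram
  obtain ⟨V, hP, hPX⟩ := exists_isStarProjection_conjTranspose_mul_self_mul_eq X
  have hXP : Xᴴ * (Vᴴ * V) = Xᴴ := by
    rw [← hP.isSelfAdjoint.star_eq, star_eq_conjTranspose, ← conjTranspose_mul, hPX]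
  refine ⟨V * X, V * Y, ?_, ?_, ?_⟩
  · rw [conjTranspose_mul, Matrix.mul_assoc, ← Matrix.mul_assoc Vᴴ, hPX]
  · rw [conjTranspose_mul, Matrix.mul_assoc, ← Matrix.mul_assoc Vᴴ, ← Matrix.mul_assoc, hXP]
  · have hsub : Yᴴ * Y - (V * Y)ᴴ * (V * Y) = Yᴴ * (1 - Vᴴ * V) * Y := by
      rw [conjTranspose_mul, Matrix.mul_sub, Matrix.sub_mul, Matrix.mul_one]
      simp only [Matrix.mul_assoc]
    rw [hsub]
    exact hP.one_sub_nonneg.posSemidef.conjTranspose_mul_mul_same Y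

end Matrix

section TwoPositive

open scoped MatrixOrder

variable {𝕜 n : Type*} [RCLike 𝕜] [Fintype n]

def IsTwoPositive (φ : Matrix n n 𝕜 → 𝕜) : Prop :=
  ∀ a b c : Matrix n n 𝕜, (fromBlocks a c cᴴ b).PosSemidef → (!![φ a, φ c; φ cᴴ, φ b]).PosSemidef

namespace IsTwoPositive

variable {φ : Matrix n n 𝕜 → 𝕜}

theorem map_conjTranspose [DecidableEq n] (hφ : IsTwoPositive φ) (a : Matrix n n 𝕜) :
    φ aᴴ = star (φ a) := by
  have hblock := posSemidef_fromBlocks_gram aᴴ (1 : Matrix n n 𝕜)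
  simp only [conjTranspose_conjTranspose, conjTranspose_one, Matrix.mul_one, Matrix.one_mul]
    at hblock
  exact (posSemidef_fin_two_iff.mp (hφ _ _ _ hblock)).2.2.1

theorem nonneg [DecidableEq n] (hφ : IsTwoPositive φ) {a : Matrix n n 𝕜} (ha : a.PosSemidef) :
    0 ≤ φ a := by
  obtain ⟨x, hx⟩ := CStarAlgebra.nonneg_iff_eq_star_mul_self.mp ha.nonneg
  rw [star_eq_conjTranspose] at hx
  have hblock : (fromBlocks a 0 (0 : Matrix n n 𝕜)ᴴ 0).PosSemidef := by
    simpa [hx] using posSemidef_fromBlocks_gram x (0 : Matrix n n 𝕜)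
  exact (posSemidef_fin_two_iff.mp (hφ a 0 0 hblock)).1

theorem monotone [DecidableEq n] (hφ : IsTwoPositive φ) {a b : Matrix n n 𝕜} (ha : a.PosSemidef)
    (hba : (b - a).PosSemidef) : φ a ≤ φ b := by
  obtain ⟨x, hx⟩ := CStarAlgebra.nonneg_iff_eq_star_mul_self.mp ha.nonneg
  obtain ⟨z, hz⟩ := CStarAlgebra.nonneg_iff_eq_star_mul_self.mp hba.nonneg
  rw [star_eq_conjTranspose] at hx hz
  have hblock : (fromBlocks b a aᴴ a).PosSemidef := by
    rw [ha.1.eq, ← sub_add_cancel b a, hz, hx]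
    simpa [fromBlocks_add] using
      (posSemidef_fromBlocks_gram z (0 : Matrix n n 𝕜)).add (posSemidef_fromBlocks_gram x x)
  have h2 := hφ b a a hblock
  rw [ha.1.eq] at h2
  exact h2.le_of_fin_two

theorem sq_norm_le (hφ : IsTwoPositive φ) (a b : Matrix n n 𝕜) :
    ((‖φ (aᴴ * b)‖ : ℝ) : 𝕜) ^ 2 ≤ φ (aᴴ * a) * φ (bᴴ * b) := by
  have hblock := posSemidef_fromBlocks_gram a b
  rw [← conjTranspose_conjTranspose (bᴴ * a), conjTranspose_mul, conjTranspose_conjTranspose]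
    at hblock
  exact (posSemidef_fin_two_iff.mp (hφ _ _ _ hblock)).2.2.2

end IsTwoPositive

theorem isTwoPositive_of [DecidableEq n] {φ : Matrix n n 𝕜 → 𝕜}
    (hpos : ∀ a : Matrix n n 𝕜, a.PosSemidef → 0 ≤ φ a)
    (hmono : ∀ a b : Matrix n n 𝕜, a.PosSemidef → (b - a).PosSemidef → φ a ≤ φ b)
    (hstar : ∀ a : Matrix n n 𝕜, φ aᴴ = star (φ a))
    (hschwarz : ∀ a b : Matrix n n 𝕜,
      ((‖φ (aᴴ * b)‖ : ℝ) : 𝕜) ^ 2 ≤ φ (aᴴ * a) * φ (bᴴ * b)) :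
    IsTwoPositive φ := by
  intro a b c h
  obtain ⟨x, y, rfl, rfl, hb⟩ := h.exists_fromBlocks_eq_square_gram
  have hy := posSemidef_conjTranspose_mul_self y
  have hφc : ((‖φ (xᴴ * y)‖ : ℝ) : 𝕜) ^ 2 ≤ φ (xᴴ * x) * φ b :=
    (hschwarz x y).trans (mul_le_mul_of_nonneg_left (hmono _ _ hy hb)
      (hpos _ (posSemidef_conjTranspose_mul_self x)))
  rw [hstar]
  exact posSemidef_fin_two_of (hpos _ (posSemidef_conjTranspose_mul_self x))
    (hpos _ (by simpa using hb.add hy)) hφc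

end TwoPositive

/-- a (possibly non-linear) functional `φ` is 2-positive iff it is positive,
monotone on positives, star-preserving, and satisfies the Schwarz inequality. -/
theorem stmt11 (n : ℕ) (φ : Matrix (Fin n) (Fin n) ℂ → ℂ) :
    (∀ a b c : Matrix (Fin n) (Fin n) ℂ, (Matrix.fromBlocks a c cᴴ b).PosSemidef →
        (!![φ a, φ c; φ cᴴ, φ b] : Matrix (Fin 2) (Fin 2) ℂ).PosSemidef) ↔
      ((∀ a : Matrix (Fin n) (Fin n) ℂ, a.PosSemidef → 0 ≤ φ a) ∧
       (∀ a b : Matrix (Fin n) (Fin n) ℂ, a.PosSemidef → (b - a).PosSemidef → φ a ≤ φ b) ∧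
       (∀ a : Matrix (Fin n) (Fin n) ℂ, φ aᴴ = star (φ a)) ∧
       (∀ a b : Matrix (Fin n) (Fin n) ℂ,
         ((‖φ (aᴴ * b)‖ : ℝ) : ℂ) ^ 2 ≤ φ (aᴴ * a) * φ (bᴴ * b))) := by
  change IsTwoPositive φ ↔ _
  refine ⟨fun hφ => ⟨fun _ => hφ.nonneg, fun _ _ => hφ.monotone, hφ.map_conjTranspose,
    hφ.sq_norm_le⟩, ?_⟩
  rintro ⟨hpos, hmono, hstar, hschwarz⟩
  exact isTwoPositive_of hpos hmono hstar hschwarz
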